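/- arXiv:1601.06450 — 5 statements merged into one kernel-verified Lean document; each statement's English description precedes it below -/
import Mathlib

section
/- Let A be a finite set, G, H ⊆ A, and P ⊆ Q ⊆ A × A binary relations. Suppose there are ternary operations d_0, d_1, ..., d_n : A³ → A such that: (a) for each i, if (p,p') ∈ P, (q,q') ∈ Q, (r,r') ∈ P then (d_i(p,q,r), d_i(p',q',r')) ∈ P; (b) d_i(x,y,y) = d_{i+1}(x,x,y) for all x,y ∈ A and all i < n; (c) d_0(x,y,z) = x and d_n(x,y,z) = z for all x,y,z ∈ A. Assume further: (i) there exist a ∈ G and c ∈ H with (a,c) ∈ Q; (ii) every c ∈ G has some a ∈ G with (a,c) ∈ P; (iii) every a ∈ H has some c ∈ H with (a,c) ∈ P. Then there exists a directed P-walk from an element of G to an element of H, i.e., a sequence (a_0,...,a_m) with a_0 ∈ G, a_m ∈ H, and (a_{i-1},a_i) ∈ P for all i. -/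
theorem stmt3 {A : Type*} [Fintype A] (G H : Set A) (P Q : A → A → Prop)
    (hPQ : ∀ x y, P x y → Q x y)
    (n : ℕ) (d : ℕ → A → A → A → A)
    (ha : ∀ i ≤ n, ∀ p p' q q' r r', P p p' → Q q q' → P r r' →
      P (d i p q r) (d i p' q' r'))
    (hb : ∀ i < n, ∀ x y : A, d i x y y = d (i + 1) x x y)
    (hc0 : ∀ x y z : A, d 0 x y z = x)
    (hcn : ∀ x y z : A, d n x y z = z)
    (hi : ∃ a ∈ G, ∃ c ∈ H, Q a c)
    (hii : ∀ c ∈ G, ∃ a ∈ G, P a c)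
    (hiii : ∀ a ∈ H, ∃ c ∈ H, P a c) :
    ∃ m : ℕ, ∃ f : ℕ → A, f 0 ∈ G ∧ f m ∈ H ∧ ∀ i < m, P (f i) (f (i + 1)) := by
  classical
  obtain ⟨a, haG, c, hcH, hQac⟩ := hi
  rcases Nat.eq_zero_or_pos n with hn | hn
  · subst hn
    have hac : a = c := by rw [← hc0 a a c, hcn a a c]
    exact ⟨0, fun _ => a, haG, hac ▸ hcH, fun i h => absurd h (Nat.not_lt_zero i)⟩
  obtain ⟨σ, hσ⟩ : ∃ σ : A → A, ∀ x ∈ G, σ x ∈ G ∧ P (σ x) x := by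
    choose f hf1 hf2 using hii
    exact ⟨fun x => if h : x ∈ G then f x h else x,
      fun x hx => by simp only [dif_pos hx]; exact ⟨hf1 x hx, hf2 x hx⟩⟩
  obtain ⟨τ, hτ⟩ : ∃ τ : A → A, ∀ x ∈ H, τ x ∈ H ∧ P x (τ x) := by
    choose f hf1 hf2 using hiii
    exact ⟨fun x => if h : x ∈ H then f x h else x,
      fun x hx => by simp only [dif_pos hx]; exact ⟨hf1 x hx, hf2 x hx⟩⟩
  set b : ℕ → A := fun j => σ^[j] a with hbdef
  set e : ℕ → A := fun j => τ^[j] c with hedef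
  have hbG : ∀ j, b j ∈ G := by
    intro j; induction j with
    | zero => exact haG
    | succ j ih =>
      show σ^[j+1] a ∈ G
      rw [Function.iterate_succ_apply']
      exact (hσ _ ih).1
  have heH : ∀ j, e j ∈ H := by
    intro j; induction j with
    | zero => exact hcH
    | succ j ih =>
      show τ^[j+1] c ∈ H
      rw [Function.iterate_succ_apply']
      exact (hτ _ ih).1
  have hbP : ∀ j, P (b (j + 1)) (b j) := by
    intro j
    show P (σ^[j+1] a) (σ^[j] a)
    rw [Function.iterate_succ_apply']
    exact (hσ _ (hbG j)).2
  have heP : ∀ j, P (e j) (e (j + 1)) := by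
    intro j
    show P (τ^[j] c) (τ^[j+1] c)
    rw [Function.iterate_succ_apply']
    exact (hτ _ (heH j)).2
  -- pigeonhole: a common period K after time k
  obtain ⟨k, K, hK, hbk, hek⟩ : ∃ k K, 0 < K ∧ b (k + K) = b k ∧ e (k + K) = e k := by
    obtain ⟨j₁, j₂, hne, heq⟩ :=
      Finite.exists_ne_map_eq_of_infinite (fun j : ℕ => (b j, e j))
    have h1 : b j₁ = b j₂ := congrArg Prod.fst heq
    have h2 : e j₁ = e j₂ := congrArg Prod.snd heq
    rcases hne.lt_or_gt with h | h
    · exact ⟨j₁, j₂ - j₁, by omega,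
        by rw [show j₁ + (j₂ - j₁) = j₂ by omega]; exact h1.symm,
        by rw [show j₁ + (j₂ - j₁) = j₂ by omega]; exact h2.symm⟩
    · exact ⟨j₂, j₁ - j₂, by omega,
        by rw [show j₂ + (j₁ - j₂) = j₁ by omega]; exact h1,
        by rw [show j₂ + (j₁ - j₂) = j₁ by omega]; exact h2⟩
  have hbper : ∀ q, k ≤ q → b (q + K) = b q := by
    intro q hq
    show σ^[q + K] a = σ^[q] a
    rw [show q + K = (q - k) + (k + K) by omega, Function.iterate_add_apply]
    have : σ^[k + K] a = σ^[k] a := hbk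
    rw [this, ← Function.iterate_add_apply, show q - k + k = q by omega]
  have heper : ∀ q, k ≤ q → e (q + K) = e q := by
    intro q hq
    show τ^[q + K] c = τ^[q] c
    rw [show q + K = (q - k) + (k + K) by omega, Function.iterate_add_apply]
    have : τ^[k + K] c = τ^[k] c := hek
    rw [this, ← Function.iterate_add_apply, show q - k + k = q by omega]
  have hbmul : ∀ m q, k ≤ q → b (q + m * K) = b q := by
    intro m
    induction m with
    | zero => intro q hq; simp
    | succ m ih =>
      intro q hq
      rw [show q + (m + 1) * K = (q + m * K) + K by ring,
        hbper _ (by omega), ih q hq]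
  have hemul : ∀ m q, k ≤ q → e (q + m * K) = e q := by
    intro m
    induction m with
    | zero => intro q hq; simp
    | succ m ih =>
      intro q hq
      rw [show q + (m + 1) * K = (q + m * K) + K by ring,
        heper _ (by omega), ih q hq]
  -- choose parameters
  have hkK : 2 * k + 1 ≤ (2 * k + 1) * K := Nat.le_mul_of_pos_right _ hK
  set p : ℕ := (2 * k + 1) * K - (k + 1) with hpdef
  set L : ℕ := p + 1 + k with hLdef
  have hpk : k ≤ p := by omega
  have hLK : L = (2 * k + 1) * K := by omega
  have hL0 : 0 < L := by omega
  have hbpL : b (p + L) = b p := by rw [hLK]; exact hbmul (2 * k + 1) p hpk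
  have herL : e (k + L) = e k := by rw [hLK]; exact hemul (2 * k + 1) k le_rfl
  have hb0 : b 0 = a := rfl
  have he0 : e 0 = c := rfl
  -- the three coordinate walks of one segment, each of length L
  set U : ℕ → A := fun j => b (p + L - j) with hUdef
  set V : ℕ → A := fun j => if j ≤ p then b (p - j) else e (j - (p + 1)) with hVdef
  set W : ℕ → A := fun j => e (k + j) with hWdef
  have hU0 : U 0 = b p := by
    show b (p + L - 0) = b p
    rw [Nat.sub_zero]; exact hbpL
  have hUL : U L = b p := by
    show b (p + L - L) = b p
    rw [Nat.add_sub_cancel]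
  have hV0 : V 0 = b p := by
    show (if 0 ≤ p then b (p - 0) else _) = b p
    rw [if_pos (Nat.zero_le p), Nat.sub_zero]
  have hVL : V L = e k := by
    show (if L ≤ p then _ else e (L - (p + 1))) = e k
    rw [if_neg (by omega), show L - (p + 1) = k by omega]
  have hW0 : W 0 = e k := by
    show e (k + 0) = e k
    rw [Nat.add_zero]
  have hWL : W L = e k := herL
  have hUstep : ∀ j < L, P (U j) (U (j + 1)) := by
    intro j hj
    show P (b (p + L - j)) (b (p + L - (j + 1)))
    rw [show p + L - j = (p + L - (j + 1)) + 1 by omega]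
    exact hbP _
  have hVstep : ∀ j < L, Q (V j) (V (j + 1)) := by
    intro j hj
    rcases lt_trichotomy j p with h | h | h
    · show Q (if j ≤ p then b (p - j) else _) (if j + 1 ≤ p then b (p - (j + 1)) else _)
      rw [if_pos (le_of_lt h), if_pos (show j + 1 ≤ p from h)]
      rw [show p - j = (p - (j + 1)) + 1 by omega]
      exact hPQ _ _ (hbP _)
    · show Q (if j ≤ p then b (p - j) else e (j - (p + 1)))
        (if j + 1 ≤ p then b (p - (j + 1)) else e (j + 1 - (p + 1)))
      rw [if_pos (le_of_eq h), if_neg (by omega), show p - j = 0 by omega,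
        show j + 1 - (p + 1) = 0 by omega, hb0, he0]
      exact hQac
    · show Q (if j ≤ p then _ else e (j - (p + 1))) (if j + 1 ≤ p then _ else e (j + 1 - (p + 1)))
      rw [if_neg (by omega), if_neg (by omega),
        show j + 1 - (p + 1) = (j - (p + 1)) + 1 by omega]
      exact hPQ _ _ (heP _)
  have hWstep : ∀ j < L, P (W j) (W (j + 1)) := by
    intro j hj
    show P (e (k + j)) (e (k + (j + 1)))
    rw [← Nat.add_assoc]
    exact heP _
  -- the walk
  refine ⟨n * L, fun t => d (t / L) (U (t % L)) (V (t % L)) (W (t % L)), ?_, ?_, ?_⟩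
  · show d (0 / L) (U (0 % L)) (V (0 % L)) (W (0 % L)) ∈ G
    rw [Nat.zero_div, Nat.zero_mod, hc0, hU0]
    exact hbG p
  · show d (n * L / L) (U (n * L % L)) (V (n * L % L)) (W (n * L % L)) ∈ H
    rw [Nat.mul_div_cancel _ hL0, Nat.mul_mod_left, hcn, hW0]
    exact heH k
  · intro t ht
    have hj : t % L < L := Nat.mod_lt _ hL0
    have htij : t / L * L + t % L = t := by
      rw [Nat.mul_comm]; exact Nat.div_add_mod t L
    have hin : t / L < n := by
      rcases Nat.lt_or_ge (t / L) n with h | h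
      · exact h
      · exact absurd ht (not_lt.mpr (le_trans (Nat.mul_le_mul_right L h)
          (Nat.le.intro htij)))
    show P (d (t / L) (U (t % L)) (V (t % L)) (W (t % L)))
      (d ((t + 1) / L) (U ((t + 1) % L)) (V ((t + 1) % L)) (W ((t + 1) % L)))
    rcases Nat.lt_or_ge (t % L + 1) L with hcase | hcase
    · have hdiv : (t + 1) / L = t / L := by
        rw [show t + 1 = (t % L + 1) + t / L * L by omega,
          Nat.add_mul_div_right _ _ hL0, Nat.div_eq_of_lt hcase, Nat.zero_add]
      have hmod : (t + 1) % L = t % L + 1 := by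
        rw [show t + 1 = (t % L + 1) + t / L * L by omega,
          Nat.add_mul_mod_self_right, Nat.mod_eq_of_lt hcase]
      rw [hdiv, hmod]
      exact ha _ (le_of_lt hin) _ _ _ _ _ _ (hUstep _ hj) (hVstep _ hj) (hWstep _ hj)
    · have hcase' : t % L + 1 = L := by omega
      have ht1 : t + 1 = (t / L + 1) * L := by
        rw [Nat.add_mul, Nat.one_mul]; omega
      have hdiv : (t + 1) / L = t / L + 1 := by
        rw [ht1, Nat.mul_div_cancel _ hL0]
      have hmod : (t + 1) % L = 0 := by
        rw [ht1, Nat.mul_mod_left]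
      rw [hdiv, hmod, hU0, hV0, hW0, ← hb _ hin (b p) (e k)]
      have : d (t / L) (b p) (e k) (e k)
          = d (t / L) (U (t % L + 1)) (V (t % L + 1)) (W (t % L + 1)) := by
        rw [hcase', hUL, hVL, hWL]
      rw [this]
      exact ha _ (le_of_lt hin) _ _ _ _ _ _ (hUstep _ hj) (hVstep _ hj) (hWstep _ hj)
end

section
/- Let C be a finite nonempty set, P ⊆ Q ⊆ C × C, and let d_0, ..., d_n : C³ → C be idempotent ternary operations (d_i(x,x,x) = x) such that: (a) P and Q are each closed under every d_i applied coordinatewise (if all three argument pairs lie in P then the result pair lies in P, and similarly for Q); (b) if (p,p') ∈ P, (q,q') ∈ Q, (r,r') ∈ P then (d_i(p,q,r), d_i(p',q',r')) ∈ P for every i; (c) d_i(x,y,y) = d_{i+1}(x,x,y) for all i < n; (d) d_0(x,y,z) = x and d_n(x,y,z) = z. Assume the diagonal {(c,c) : c ∈ C} is contained in Q and that there exists a closed P-walk of positive length. Then there exists c ∈ C with (c,c) ∈ P. -/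
/-!
Write `P^N` for the relation "joined by a `P`-walk of length `N`". Forming `P^N` and `Q^N`
preserves every hypothesis on the pair `(P, Q)`, because the `d i` act on walks coordinatewise.

A 2-cycle `x ⇄ y` gives a loop: for the alternating sequence `v = y, x, y, x, …` the points
`W 0 = y`, `W (i + 1) = d (i + 1) (v (i + 1)) (v (i + 1)) (W i)` form a backward `P`-walk
with `W n = W (n - 1)`. A closed walk of length `2ℓ` is a 2-cycle of `P^ℓ`, so it yields a
closed walk of length `ℓ`, and a closed walk of length `2 ^ j` yields a loop.

A closed walk `a` of length `m` also gives one of length `m n + 1` at the same vertex,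
because `t ↦ d (t + 1) (a (t + 1)) (a (t + 1)) (a t)` is a walk of length `n - 1` from `a 1`
to `a (n - 1)`. The lengths of closed walks at a vertex form an additive monoid. Once it
contains `m n` and `m n + 1`, it contains every large number, and so a power of two.
-/

namespace DirectedChainLoop

variable {α : Type*}

def RelPow (R : α → α → Prop) (N : ℕ) (a b : α) : Prop :=
  ∃ f : ℕ → α, f 0 = a ∧ f N = b ∧ ∀ i < N, R (f i) (f (i + 1))

def Compatible₃ (f : α → α → α → α) (R S T U : α → α → Prop) : Prop :=
  ∀ p p' q q' r r', R p p' → S q q' → T r r' → U (f p q r) (f p' q' r')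

structure IsDirectedChain (n : ℕ) (d : ℕ → α → α → α → α) : Prop where
  first : ∀ x y z, d 0 x y z = x
  chain : ∀ i < n, ∀ x y, d i x y y = d (i + 1) x x y
  last : ∀ x y z, d n x y z = z

structure IsCompatiblePair (n : ℕ) (d : ℕ → α → α → α → α) (P Q : α → α → Prop) : Prop where
  le : ∀ x y, P x y → Q x y
  refl : ∀ c, Q c c
  closed_Q : ∀ i ≤ n, Compatible₃ (d i) Q Q Q Q
  closed_PQP : ∀ i ≤ n, Compatible₃ (d i) P Q P P

section RelPow

variable {R S T U : α → α → Prop} {A B N : ℕ} {a b c : α}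

theorem relPow_of_forall {F : ℕ → α} (hF : ∀ i, R (F i) (F (i + 1))) (i N : ℕ) :
    RelPow R N (F i) (F (i + N)) :=
  ⟨fun t => F (i + t), rfl, rfl, fun t _ => hF (i + t)⟩

theorem RelPow.of_refl (h : ∀ a, R a a) (N : ℕ) (a : α) : RelPow R N a a :=
  ⟨fun _ => a, rfl, rfl, fun _ _ => h a⟩

theorem RelPow.rel (h : RelPow R 1 a b) : R a b := by
  obtain ⟨f, rfl, rfl, hf⟩ := h
  exact hf 0 one_pos

theorem RelPow.mono (hRS : ∀ x y, R x y → S x y) (h : RelPow R N a b) : RelPow S N a b := by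
  obtain ⟨f, hf0, hfN, hf⟩ := h
  exact ⟨f, hf0, hfN, fun i hi => hRS _ _ (hf i hi)⟩

theorem RelPow.map₃ {f : α → α → α → α} (hf : Compatible₃ f R S T U)
    {p p' q q' r r' : α} (hp : RelPow R N p p') (hq : RelPow S N q q') (hr : RelPow T N r r') :
    RelPow U N (f p q r) (f p' q' r') := by
  obtain ⟨gp, rfl, rfl, hgp⟩ := hp
  obtain ⟨gq, rfl, rfl, hgq⟩ := hq
  obtain ⟨gr, rfl, rfl, hgr⟩ := hr
  exact ⟨fun t => f (gp t) (gq t) (gr t), rfl, rfl,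
    fun i hi => hf _ _ _ _ _ _ (hgp i hi) (hgq i hi) (hgr i hi)⟩

theorem RelPow.add (h₁ : RelPow R A a b) (h₂ : RelPow R B b c) : RelPow R (A + B) a c := by
  obtain ⟨f, rfl, rfl, hf⟩ := h₁
  obtain ⟨g, hg0, rfl, hg⟩ := h₂
  refine ⟨fun t => if t ≤ A then f t else g (t - A), by simp, ?_, fun i hi => ?_⟩
  · rcases B.eq_zero_or_pos with rfl | hB
    · simp [hg0]
    · simp [show ¬A + B ≤ A by omega]
  · dsimp only
    split_ifs
    · exact hf i (by omega)
    · obtain rfl : i = A := by omega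
      simpa [hg0] using hg 0 (by omega)
    · omega
    · rw [show i + 1 - A = i - A + 1 by omega]
      exact hg _ (by omega)

theorem RelPow.exists_of_add (h : RelPow R (A + B) a c) :
    ∃ b, RelPow R A a b ∧ RelPow R B b c := by
  obtain ⟨f, rfl, rfl, hf⟩ := h
  exact ⟨f A, ⟨f, rfl, rfl, fun i hi => hf i (by omega)⟩,
    ⟨fun t => f (A + t), rfl, rfl, fun i hi => hf (A + i) (by omega)⟩⟩

theorem RelPow.exists_periodic {m : ℕ} (h : RelPow R m c c) (hm : 0 < m) :
    ∃ F : ℕ → α, F 0 = c ∧ Function.Periodic F m ∧ ∀ i, R (F i) (F (i + 1)) := by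
  obtain ⟨f, hf0, hfm, hf⟩ := h
  refine ⟨fun i => f (i % m), by simpa using hf0, fun i => by simp, fun i => ?_⟩
  have hi : i % m < m := Nat.mod_lt i hm
  have hsucc : (i + 1) % m = (i % m + 1) % m := (Nat.mod_add_mod i m 1).symm
  dsimp only
  by_cases hlast : i % m + 1 = m
  · have hstep := hf _ hi
    rw [hlast] at hstep
    rwa [hsucc, hlast, Nat.mod_self, hf0, ← hfm]
  · rw [hsucc, Nat.mod_eq_of_lt (show i % m + 1 < m by omega)]
    exact hf _ hi

def closedWalkLengths (R : α → α → Prop) (c : α) : AddSubmonoid ℕ where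
  carrier := {N | RelPow R N c c}
  zero_mem' := ⟨fun _ => c, rfl, rfl, fun _ h => absurd h (Nat.not_lt_zero _)⟩
  add_mem' := RelPow.add

end RelPow

theorem AddSubmonoid.mem_of_mod_le_div {S : AddSubmonoid ℕ} {M N : ℕ} (h₀ : M ∈ S)
    (h₁ : M + 1 ∈ S) (hN : N % M ≤ N / M) : N ∈ S := by
  have hsplit : (N / M - N % M) • M + (N % M) • (M + 1) = N := by
    have hdiv : N / M * M + N % M = N := Nat.div_add_mod' N M
    have hle : N % M * M ≤ N / M * M := Nat.mul_le_mul_right M hN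
    rw [smul_eq_mul, smul_eq_mul, Nat.sub_mul, mul_add, mul_one]
    omega
  rw [← hsplit]
  exact add_mem (nsmul_mem h₀ _) (nsmul_mem h₁ _)

theorem AddSubmonoid.exists_two_pow_mem {S : AddSubmonoid ℕ} {M : ℕ} (h₀ : M ∈ S)
    (h₁ : M + 1 ∈ S) : ∃ j, 2 ^ j ∈ S := by
  rcases M.eq_zero_or_pos with rfl | hM
  · exact ⟨0, by simpa using h₁⟩
  refine ⟨M * M, mem_of_mod_le_div h₀ h₁ ?_⟩
  have hdiv : M ≤ 2 ^ (M * M) / M :=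
    (Nat.le_div_iff_mul_le hM).2 Nat.lt_two_pow_self.le
  exact (Nat.mod_lt _ hM).le.trans hdiv

section Chain

variable {n : ℕ} {d : ℕ → α → α → α → α} {P Q : α → α → Prop}

theorem IsDirectedChain.eq_of_zero (hd : IsDirectedChain 0 d) (x y : α) : x = y := by
  rw [← hd.first x x y, hd.last]

theorem IsDirectedChain.idem (hd : IsDirectedChain n d) : ∀ i ≤ n, ∀ x, d i x x x = x := by
  intro i
  induction i with
  | zero => intro _ x; exact hd.first x x x
  | succ i ih => intro hi x; rw [← hd.chain i (by omega), ih (by omega)]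

theorem IsDirectedChain.exists_loop_of_backward_walk (hd : IsDirectedChain n d) (hn : 0 < n)
    (hQ : ∀ i ≤ n, Compatible₃ (d i) Q Q Q Q) (hPQP : ∀ i ≤ n, Compatible₃ (d i) P Q P P)
    (v : ℕ → α) (hvP : ∀ i, P (v (i + 1)) (v i)) (hvQ : ∀ i j, Q (v i) (v j)) :
    ∃ s, P s s := by
  let W : ℕ → α := fun i => Nat.rec (v 0) (fun k w => d (k + 1) (v (k + 1)) (v (k + 1)) w) i
  have hW : ∀ k, W (k + 1) = d (k + 1) (v (k + 1)) (v (k + 1)) (W k) := fun _ => rfl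
  have hWQ : ∀ i ≤ n, ∀ j, Q (W i) (v j) := by
    intro i
    induction i with
    | zero => intro _ j; exact hvQ 0 j
    | succ k ih =>
      intro hk j
      rw [hW, ← hd.idem (k + 1) hk (v j)]
      exact hQ (k + 1) hk _ _ _ _ _ _ (hvQ _ _) (hvQ _ _) (ih (by omega) j)
  have hWP : ∀ i < n, P (W (i + 1)) (W i) := by
    intro i
    induction i with
    | zero =>
      intro h0
      rw [hW, ← hd.chain 0 h0, hd.first]
      exact hvP 0
    | succ k ih =>
      intro hk
      have hstep := hPQP (k + 1) hk.le _ _ _ _ _ _ (hvP (k + 1)) (hWQ (k + 1) (by omega) (k + 1))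
        (ih (by omega))
      rwa [hd.chain (k + 1) hk, ← hW (k + 1), ← hW k] at hstep
  obtain ⟨k, rfl⟩ : ∃ k, n = k + 1 := ⟨n - 1, by omega⟩
  have hloop := hWP k (by omega)
  rw [hW, hd.last] at hloop
  exact ⟨W k, hloop⟩

theorem IsCompatiblePair.exists_loop_of_two_cycle (h : IsCompatiblePair n d P Q)
    (hd : IsDirectedChain n d) (hn : 0 < n) {x y : α} (hxy : P x y) (hyx : P y x) :
    ∃ s, P s s := by
  refine hd.exists_loop_of_backward_walk hn h.closed_Q h.closed_PQP
    (fun i => if Even i then y else x) (fun i => ?_) (fun i j => ?_)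
  · by_cases hi : Even i <;> simp [hi, Nat.even_add_one, hxy, hyx]
  · split_ifs
    exacts [h.refl y, h.le _ _ hyx, h.le _ _ hxy, h.refl x]

theorem IsCompatiblePair.relPow (h : IsCompatiblePair n d P Q) (N : ℕ) :
    IsCompatiblePair n d (RelPow P N) (RelPow Q N) where
  le _ _ := RelPow.mono h.le
  refl := RelPow.of_refl h.refl N
  closed_Q i hi _ _ _ _ _ _ := RelPow.map₃ (h.closed_Q i hi)
  closed_PQP i hi _ _ _ _ _ _ := RelPow.map₃ (h.closed_PQP i hi)

theorem IsCompatiblePair.exists_relPow_of_relPow_two_mul (h : IsCompatiblePair n d P Q)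
    (hd : IsDirectedChain n d) (hn : 0 < n) {ℓ : ℕ} {c : α} (hc : RelPow P (2 * ℓ) c c) :
    ∃ s, RelPow P ℓ s s := by
  rw [two_mul] at hc
  obtain ⟨b, hcb, hbc⟩ := hc.exists_of_add
  exact (h.relPow ℓ).exists_loop_of_two_cycle hd hn hcb hbc

theorem IsCompatiblePair.exists_loop_of_relPow_two_pow (h : IsCompatiblePair n d P Q)
    (hd : IsDirectedChain n d) (hn : 0 < n) (j : ℕ) {c : α} (hc : RelPow P (2 ^ j) c c) :
    ∃ s, P s s := by
  induction j generalizing c with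
  | zero => exact ⟨c, hc.rel⟩
  | succ j ih =>
    rw [pow_succ'] at hc
    obtain ⟨s, hs⟩ := h.exists_relPow_of_relPow_two_mul hd hn hc
    exact ih hs

theorem IsDirectedChain.relPow_second_penultimate (hd : IsDirectedChain n d) (hn : 0 < n)
    (hdiag : ∀ c, Q c c) (hPQP : ∀ i ≤ n, Compatible₃ (d i) P Q P P) {a : ℕ → α}
    (ha : ∀ i < n, P (a i) (a (i + 1))) : RelPow P (n - 1) (a 1) (a (n - 1)) := by
  refine ⟨fun t => d (t + 1) (a (t + 1)) (a (t + 1)) (a t), ?_, ?_, fun t ht => ?_⟩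
  · show d 1 (a 1) (a 1) (a 0) = a 1
    rw [← hd.chain 0 hn, hd.first]
  · show d (n - 1 + 1) (a (n - 1 + 1)) (a (n - 1 + 1)) (a (n - 1)) = a (n - 1)
    rw [Nat.sub_add_cancel hn, hd.last]
  · have hstep := hPQP (t + 1) (by omega) _ _ _ _ _ _ (ha (t + 1) (by omega))
      (hdiag (a (t + 1))) (ha t (by omega))
    rwa [hd.chain (t + 1) (by omega)] at hstep

theorem IsDirectedChain.relPow_mul_add_one (hd : IsDirectedChain n d) (hn : 0 < n)
    (hdiag : ∀ c, Q c c) (hPQP : ∀ i ≤ n, Compatible₃ (d i) P Q P P) {m : ℕ} (hm : 0 < m)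
    {c : α} (hc : RelPow P m c c) : RelPow P (n * m + 1) c c := by
  obtain ⟨F, rfl, hper, hF⟩ := hc.exists_periodic hm
  obtain ⟨k, rfl⟩ : ∃ k, n = k + 1 := ⟨n - 1, by omega⟩
  obtain ⟨l, rfl⟩ : ∃ l, m = l + 1 := ⟨m - 1, by omega⟩
  have hhead : RelPow P k (F 0) (F (l + k)) := by
    have hshort := hd.relPow_second_penultimate hn hdiag hPQP (a := fun i => F (l + i))
      (fun i _ => hF (l + i))
    simpa [← hper 0, add_comm] using hshort
  have htail : RelPow P (l * k + l + 2) (F (l + k)) (F 0) := by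
    have hseg := relPow_of_forall hF (l + k) (l * k + l + 2)
    have hend : F ((k + 2) * (l + 1)) = F 0 := by simpa using hper.nat_mul_eq (k + 2)
    rwa [show l + k + (l * k + l + 2) = (k + 2) * (l + 1) by ring, hend] at hseg
  convert hhead.add htail using 1
  ring

end Chain

end DirectedChainLoop

open DirectedChainLoop

theorem stmt4_general {C : Type*} (P Q : C → C → Prop)
    (hPQ : ∀ x y, P x y → Q x y)
    (n : ℕ) (d : ℕ → C → C → C → C)
    (haQ : ∀ i ≤ n, ∀ p p' q q' r r', Q p p' → Q q q' → Q r r' →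
      Q (d i p q r) (d i p' q' r'))
    (hb : ∀ i ≤ n, ∀ p p' q q' r r', P p p' → Q q q' → P r r' →
      P (d i p q r) (d i p' q' r'))
    (hchain : ∀ i < n, ∀ x y : C, d i x y y = d (i + 1) x x y)
    (hd0 : ∀ x y z : C, d 0 x y z = x)
    (hdn : ∀ x y z : C, d n x y z = z)
    (hdiag : ∀ c : C, Q c c)
    (hwalk : ∃ m : ℕ, 0 < m ∧ ∃ f : ℕ → C, f 0 = f m ∧
      ∀ i < m, P (f i) (f (i + 1))) :
    ∃ c : C, P c c := by
  obtain ⟨m, hm, f, hfm, hf⟩ := hwalk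
  have hd : IsDirectedChain n d := ⟨hd0, hchain, hdn⟩
  rcases n.eq_zero_or_pos with rfl | hn
  · exact ⟨f 0, hd.eq_of_zero (f 1) (f 0) ▸ hf 0 hm⟩
  have hc : m ∈ closedWalkLengths P (f 0) := ⟨f, rfl, hfm.symm, hf⟩
  have hnm : n * m ∈ closedWalkLengths P (f 0) := by simpa using nsmul_mem hc n
  obtain ⟨j, hj⟩ := AddSubmonoid.exists_two_pow_mem hnm (hd.relPow_mul_add_one hn hdiag hb hm hc)
  exact IsCompatiblePair.exists_loop_of_relPow_two_pow ⟨hPQ, hdiag, haQ, hb⟩ hd hn j hj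

theorem stmt4 {C : Type*} [Fintype C] [Nonempty C] (P Q : C → C → Prop)
    (hPQ : ∀ x y, P x y → Q x y)
    (n : ℕ) (d : ℕ → C → C → C → C)
    (hidem : ∀ i ≤ n, ∀ x : C, d i x x x = x)
    (haP : ∀ i ≤ n, ∀ p p' q q' r r', P p p' → P q q' → P r r' →
      P (d i p q r) (d i p' q' r'))
    (haQ : ∀ i ≤ n, ∀ p p' q q' r r', Q p p' → Q q q' → Q r r' →
      Q (d i p q r) (d i p' q' r'))
    (hb : ∀ i ≤ n, ∀ p p' q q' r r', P p p' → Q q q' → P r r' →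
      P (d i p q r) (d i p' q' r'))
    (hchain : ∀ i < n, ∀ x y : C, d i x y y = d (i + 1) x x y)
    (hd0 : ∀ x y z : C, d 0 x y z = x)
    (hdn : ∀ x y z : C, d n x y z = z)
    (hdiag : ∀ c : C, Q c c)
    (hwalk : ∃ m : ℕ, 0 < m ∧ ∃ f : ℕ → C, f 0 = f m ∧
      ∀ i < m, P (f i) (f (i + 1))) :
    ∃ c : C, P c c :=
  stmt4_general P Q hPQ n d haQ hb hchain hd0 hdn hdiag hwalk
end

section
/- Let A be a set, B ⊆ A, and R ⊆ A^n a B-essential relation with n ≥ 2. Then the relation R' = { (a_2, ..., a_n) ∈ A^{n−1} : ∃ b ∈ B, (b, a_2, ..., a_n) ∈ R } is B-essential. Consequently, the set of arities n for which a B-essential relation exists within a given pp-closed family of relations is a downward-closed subset of the positive integers. -/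
/-- `R ⊆ A^n` is `B`-essential: it avoids `B^n` but, for each coordinate `i`,
contains a tuple whose entries outside `i` all lie in `B`. -/
def BEssential {A : Type*} (B : Set A) {n : ℕ} (R : Set (Fin n → A)) : Prop :=
  (¬ ∃ r ∈ R, ∀ i, r i ∈ B) ∧ ∀ i, ∃ r ∈ R, ∀ j, j ≠ i → r j ∈ B

theorem stmt8 {A : Type*} (B : Set A) (n : ℕ) (hn : 2 ≤ n + 1)
    (R : Set (Fin (n + 1) → A)) (hR : BEssential B R) :
    BEssential B {a : Fin n → A | ∃ b ∈ B, Fin.cons b a ∈ R} := by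
  constructor
  · rintro ⟨a, ⟨b, hb, hR'⟩, ha⟩
    exact hR.1 ⟨Fin.cons b a, hR', fun i => i.cases hb ha⟩
  · intro i
    obtain ⟨r, hrR, hr⟩ := hR.2 i.succ
    refine ⟨Fin.tail r, ⟨r 0, hr 0 (by simp [Fin.ext_iff]), ?_⟩, ?_⟩
    · simpa [Fin.cons_self_tail] using hrR
    · intro j hj
      exact hr j.succ (by simpa [Fin.succ_inj] using hj)
end

section
/- Let A be a set, B ⊆ A, and t : A^n → A an operation such that for every coordinate position j, t maps any tuple whose entries other than the j-th all lie in B into B (t is an absorption operation for B). Then no relation R ⊆ A^n that is closed under the coordinatewise action of t is B-essential. That is, if R is closed under t componentwise and for each i ∈ {1,...,n} there is a tuple r^{(i)} ∈ R whose entries outside coordinate i all lie in B, then R ∩ B^n ≠ ∅. -/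
theorem stmt9 {A : Type*} (B : Set A) (n : ℕ) (t : (Fin n → A) → A)
    (habs : ∀ (j : Fin n) (x : Fin n → A), (∀ i, i ≠ j → x i ∈ B) → t x ∈ B)
    (R : Set (Fin n → A))
    (hclosed : ∀ r : Fin n → (Fin n → A), (∀ i, r i ∈ R) →
      (fun j => t (fun i => r i j)) ∈ R)
    (hess : ∀ i : Fin n, ∃ r ∈ R, ∀ j, j ≠ i → r j ∈ B) :
    ∃ r ∈ R, ∀ j, r j ∈ B := by
  choose r hrR hrB using hess
  refine ⟨fun j => t (fun i => r i j), hclosed r hrR, fun j => ?_⟩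
  exact habs j _ (fun i hij => hrB i j (Ne.symm hij))
end

section
/- Let A be a set, B ⊆ A, κ ≥ 1, and l_1, ..., l_κ positive integers with s = l_1 + ... + l_κ. Let W ⊆ A^s (coordinates grouped into blocks of sizes l_1,...,l_κ) satisfy: W ∩ B^s = ∅, and for each i ∈ {1,...,κ}, W intersects B^{l_1+...+l_{i−1}} × A^{l_i} × B^{l_{i+1}+...+l_κ}. Then there exist indices m_i ∈ {1,...,l_i} for each i, and sets C_i^j ∈ {A, B} for each i and each j ∈ {1,...,l_i}\{m_i}, such that the κ-ary relation U' = { (a_1^{m_1}, ..., a_κ^{m_κ}) : (a_1^1,...,a_1^{l_1},...,a_κ^1,...,a_κ^{l_κ}) ∈ W and a_i^j ∈ C_i^j for all i and all j ≠ m_i } is B-essential. -/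
theorem sigEq10 {κ : ℕ} {l : Fin κ → ℕ} (p q : Σ i : Fin κ, Fin (l i)) (h : p.1 = q.1) :
    ∃ j : Fin (l p.1), (⟨p.1, j⟩ : Σ i : Fin κ, Fin (l i)) = q := by
  obtain ⟨qi, qj⟩ := q
  obtain ⟨pi, pj⟩ := p
  dsimp at h
  subst h
  exact ⟨qj, rfl⟩

theorem aux10 {A : Type*} (B : Set A) (κ : ℕ) (l : Fin κ → ℕ)
    (W : Set ((Σ i : Fin κ, Fin (l i)) → A))
    (T : Finset (Σ i : Fin κ, Fin (l i))) :
    ∀ C : (Σ i : Fin κ, Fin (l i)) → Set A,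
      (∀ p, C p = Set.univ ∨ C p = B) →
      (∀ i : Fin κ, ∃ j, (⟨i, j⟩ : Σ i : Fin κ, Fin (l i)) ∈ T) →
      (¬ ∃ w ∈ W, (∀ p ∉ T, w p ∈ C p) ∧ ∀ p ∈ T, w p ∈ B) →
      (∀ i : Fin κ, ∃ w ∈ W, (∀ p ∉ T, w p ∈ C p) ∧ ∀ p ∈ T, p.1 ≠ i → w p ∈ B) →
      ∃ m : ∀ i : Fin κ, Fin (l i), ∃ Cf : ∀ i : Fin κ, Fin (l i) → Set A,
        (∀ i j, Cf i j = Set.univ ∨ Cf i j = B) ∧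
        ((¬ ∃ a ∈ {a : Fin κ → A | ∃ w ∈ W, (∀ i, w ⟨i, m i⟩ = a i) ∧
            ∀ i (j : Fin (l i)), j ≠ m i → w ⟨i, j⟩ ∈ Cf i j}, ∀ i, a i ∈ B) ∧
         ∀ i : Fin κ, ∃ a ∈ {a : Fin κ → A | ∃ w ∈ W, (∀ i, w ⟨i, m i⟩ = a i) ∧
            ∀ i (j : Fin (l i)), j ≠ m i → w ⟨i, j⟩ ∈ Cf i j}, ∀ j, j ≠ i → a j ∈ B) := by
  classical
  induction T using Finset.strongInduction with
  | _ T ih =>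
    intro C hC h3 h1 h2
    by_cases hdup : ∃ p₀ ∈ T, ∃ q ∈ T, p₀.1 = q.1 ∧ p₀ ≠ q
    · -- some block has at least two active coordinates
      obtain ⟨p₀, hp₀, q, hq, hfst, hne⟩ := hdup
      by_cases hA : ∃ w ∈ W, (∀ p ∉ T, w p ∈ C p) ∧ ∀ p ∈ T, p ≠ p₀ → w p ∈ B
      · -- Case A: collapse block p₀.1 to the single coordinate p₀
        set T' : Finset (Σ i : Fin κ, Fin (l i)) :=
          T.filter (fun p => p.1 ≠ p₀.1 ∨ p = p₀) with hT'
        have hsub : T' ⊂ T := by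
          refine ⟨Finset.filter_subset _ _, fun hTsub => ?_⟩
          have := hTsub hq
          rw [hT', Finset.mem_filter] at this
          rcases this.2 with h | h
          · exact h hfst.symm
          · exact hne (h ▸ rfl)
        set C' : (Σ i : Fin κ, Fin (l i)) → Set A :=
          fun p => if p ∈ T ∧ p ∉ T' then B else C p with hC'
        have hCmemT' : ∀ p, p ∈ T → p ∉ T' → C' p = B := by
          intro p h h'; simp [hC', h, h']
        have hCmemNT : ∀ p, p ∉ T → C' p = C p := by
          intro p h; simp [hC', h]
        have hT'mem : ∀ p, p ∈ T → p ∉ T' → p.1 = p₀.1 ∧ p ≠ p₀ := by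
          intro p h h'
          rw [hT', Finset.mem_filter] at h'
          push_neg at h'
          exact h' h
        refine ih T' hsub C' ?_ ?_ ?_ ?_
        · intro p
          by_cases h : p ∈ T ∧ p ∉ T'
          · right; simp [hC', h]
          · rw [hC']; simp only [h, if_false]; exact hC p
        · intro i
          by_cases hi : i = p₀.1
          · subst hi
            exact ⟨p₀.2, by
              rw [hT', Finset.mem_filter]
              exact ⟨hp₀, Or.inr rfl⟩⟩
          · obtain ⟨j, hj⟩ := h3 i
            exact ⟨j, by rw [hT', Finset.mem_filter]; exact ⟨hj, Or.inl hi⟩⟩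
        · rintro ⟨w, hwW, hw1, hw2⟩
          refine h1 ⟨w, hwW, fun p hp => ?_, fun p hp => ?_⟩
          · have hp' : p ∉ T' := fun h => hp (hsub.1 h)
            have := hw1 p hp'
            rwa [hCmemNT p hp] at this
          · by_cases h : p ∈ T'
            · exact hw2 p h
            · have := hw1 p h
              rwa [hCmemT' p hp h] at this
        · intro b
          by_cases hb : b = p₀.1
          · subst hb
            obtain ⟨w, hwW, hw1, hw2⟩ := hA
            refine ⟨w, hwW, fun p hp => ?_, fun p hp hpb => ?_⟩
            · by_cases h : p ∈ T
              · have h' := hT'mem p h hp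
                rw [hCmemT' p h hp]
                exact hw2 p h h'.2
              · rw [hCmemNT p h]; exact hw1 p h
            · have hpT : p ∈ T := hsub.1 hp
              refine hw2 p hpT (fun h => hpb ?_)
              rw [h]
          · obtain ⟨w, hwW, hw1, hw2⟩ := h2 b
            refine ⟨w, hwW, fun p hp => ?_, fun p hp hpb => ?_⟩
            · by_cases h : p ∈ T
              · have h' := hT'mem p h hp
                rw [hCmemT' p h hp]
                exact hw2 p h (fun he => hb (he.symm.trans h'.1))
              · rw [hCmemNT p h]; exact hw1 p h
            · exact hw2 p (hsub.1 hp) hpb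
      · -- Case B: drop coordinate p₀, unconstrained
        set T' : Finset (Σ i : Fin κ, Fin (l i)) := T.erase p₀ with hT'
        have hsub : T' ⊂ T := Finset.erase_ssubset hp₀
        set C' : (Σ i : Fin κ, Fin (l i)) → Set A :=
          fun p => if p = p₀ then Set.univ else C p with hC'
        refine ih T' hsub C' ?_ ?_ ?_ ?_
        · intro p
          by_cases h : p = p₀
          · left; simp [hC', h]
          · rw [hC']; simp only [h, if_false]; exact hC p
        · intro i
          by_cases hi : i = p₀.1
          · subst hi
            obtain ⟨j, hjq⟩ := sigEq10 p₀ q hfst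
            refine ⟨j, ?_⟩
            rw [hT', hjq, Finset.mem_erase]
            exact ⟨hne.symm, hq⟩
          · obtain ⟨j, hj⟩ := h3 i
            refine ⟨j, ?_⟩
            rw [hT', Finset.mem_erase]
            exact ⟨fun h => hi (congrArg Sigma.fst h), hj⟩
        · rintro ⟨w, hwW, hw1, hw2⟩
          refine hA ⟨w, hwW, fun p hp => ?_, fun p hp hpne => ?_⟩
          · have hp' : p ∉ T' := fun h => hp (hsub.1 h)
            have hpp : p ≠ p₀ := fun h => hp (h ▸ hp₀)
            have := hw1 p hp'
            simp only [hC', if_neg hpp] at this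
            exact this
          · exact hw2 p (Finset.mem_erase.mpr ⟨hpne, hp⟩)
        · intro b
          obtain ⟨w, hwW, hw1, hw2⟩ := h2 b
          refine ⟨w, hwW, fun p hp => ?_, fun p hp hpb => ?_⟩
          · by_cases h : p = p₀
            · simp only [hC', if_pos h]; trivial
            · have hpT : p ∉ T := fun hT => hp (Finset.mem_erase.mpr ⟨h, hT⟩)
              simp only [hC', if_neg h]
              exact hw1 p hpT
          · exact hw2 p (hsub.1 hp) hpb
    · -- base case: every block has exactly one active coordinate
      push_neg at hdup
      choose m hm using h3
      have huniq : ∀ p ∈ T, p = ⟨p.1, m p.1⟩ := by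
        intro p hp
        by_contra h
        exact h (hdup p hp ⟨p.1, m p.1⟩ (hm p.1) rfl)
      have hnotT : ∀ (i : Fin κ) (j : Fin (l i)), j ≠ m i →
          (⟨i, j⟩ : Σ i : Fin κ, Fin (l i)) ∉ T := by
        intro i j hj hmem
        have := huniq _ hmem
        simp only [Sigma.mk.inj_iff, heq_eq_eq, true_and] at this
        exact hj this
      have hPnotm : ∀ p : (Σ i : Fin κ, Fin (l i)), p ∉ T → p.2 ≠ m p.1 := by
        intro p hp h
        apply hp
        have : p = ⟨p.1, m p.1⟩ := by
          obtain ⟨pi, pj⟩ := p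
          simpa using h
        exact this ▸ hm p.1
      refine ⟨m, fun i j => C ⟨i, j⟩, fun i j => hC ⟨i, j⟩, ?_, ?_⟩
      · rintro ⟨a, ⟨w, hwW, hwa, hwC⟩, haB⟩
        refine h1 ⟨w, hwW, fun p hp => ?_, fun p hp => ?_⟩
        · exact hwC p.1 p.2 (hPnotm p hp)
        · have hpe := huniq p hp
          rw [hpe, hwa p.1]
          exact haB p.1
      · intro i
        obtain ⟨w, hwW, hw1, hw2⟩ := h2 i
        refine ⟨fun b => w ⟨b, m b⟩, ⟨w, hwW, fun b => rfl, fun b j hj => ?_⟩,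
          fun j hj => ?_⟩
        · exact hw1 ⟨b, j⟩ (hnotT b j hj)
        · exact hw2 ⟨j, m j⟩ (hm j) hj

theorem stmt10 {A : Type*} (B : Set A) (κ : ℕ) (hκ : 1 ≤ κ)
    (l : Fin κ → ℕ) (hl : ∀ i, 1 ≤ l i)
    (W : Set ((Σ i : Fin κ, Fin (l i)) → A))
    (hWB : ¬ ∃ w ∈ W, ∀ p, w p ∈ B)
    (hWess : ∀ i : Fin κ, ∃ w ∈ W, ∀ p : Σ i : Fin κ, Fin (l i),
      p.1 ≠ i → w p ∈ B) :
    ∃ m : ∀ i : Fin κ, Fin (l i), ∃ C : ∀ i : Fin κ, Fin (l i) → Set A,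
      (∀ i j, C i j = Set.univ ∨ C i j = B) ∧
      (let U' : Set (Fin κ → A) :=
        {a | ∃ w ∈ W, (∀ i, w ⟨i, m i⟩ = a i) ∧
          ∀ i (j : Fin (l i)), j ≠ m i → w ⟨i, j⟩ ∈ C i j};
       (¬ ∃ a ∈ U', ∀ i, a i ∈ B) ∧
       ∀ i : Fin κ, ∃ a ∈ U', ∀ j, j ≠ i → a j ∈ B) := by
  classical
  have := aux10 B κ l W Finset.univ (fun _ => B)
    (fun _ => Or.inr rfl)
    (fun i => ⟨⟨0, hl i⟩, Finset.mem_univ _⟩)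
    (by
      rintro ⟨w, hwW, -, hw⟩
      exact hWB ⟨w, hwW, fun p => hw p (Finset.mem_univ p)⟩)
    (fun i => by
      obtain ⟨w, hwW, hw⟩ := hWess i
      exact ⟨w, hwW, fun p hp => absurd (Finset.mem_univ p) hp,
        fun p _ hpi => hw p hpi⟩)
  exact this
end
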